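/- Let ε ∈ ℝ and let Φ_ε be the rational map Φ_ε(x,y) = ( (ε(ε+1)x² + εxy + (1−2ε)x)/D(x,y), (ε(2ε−4)x² − ε(ε+3)xy + 6εx − εy² + (2ε+1)y)/D(x,y) ), D(x,y) = 2ε²x² − ε(ε+1)x − εy + 2ε + 1. Define the density ν(x,y) = 1/(2|x|(ε²x² + 1)) on ℝ² \ {x = 0}. Then Φ_ε preserves the measure with density ν with respect to Lebesgue measure: for every (x,y) with x ≠ 0, D(x,y) ≠ 0, and the first component of Φ_ε(x,y) nonzero, one has ν(Φ_ε(x,y)) · |det JΦ_ε(x,y)| = ν(x,y), where JΦ_ε is the Jacobian matrix of Φ_ε. -/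

import Mathlib

/-!
Writing `Φ_ε = (N₁/D, N₂/D)`, the quotient rule gives `det JΦ_ε · D³` as a polynomial in `x, y`,
and a direct computation shows `det JΦ_ε · x(ε²x² + 1) = u(ε²u² + 1)` for `u` the first
component of `Φ_ε`, i.e. `Φ_ε` preserves the area form `dx ∧ dy / (x(ε²x² + 1))`.
Taking absolute values gives the invariance of `ν = 1/(2|x(ε²x² + 1)|)`.
-/

/-- Denominator of the Kahan–Hirota–Kimura map `Φ_ε` of the system
`ẋ = x(x+y-2)`, `ẏ = -x(2x+y-3)`. -/
noncomputable def Dps (ε x y : ℝ) : ℝ :=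
  2 * ε ^ 2 * x ^ 2 - ε * (ε + 1) * x - ε * y + 2 * ε + 1

/-- The Kahan–Hirota–Kimura map `Φ_ε` of the system `ẋ = x(x+y-2)`, `ẏ = -x(2x+y-3)`. -/
noncomputable def Phips (ε : ℝ) (q : ℝ × ℝ) : ℝ × ℝ :=
  ((ε * (ε + 1) * q.1 ^ 2 + ε * q.1 * q.2 + (1 - 2 * ε) * q.1) / Dps ε q.1 q.2,
   (ε * (2 * ε - 4) * q.1 ^ 2 - ε * (ε + 3) * q.1 * q.2 + 6 * ε * q.1 - ε * q.2 ^ 2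
      + (2 * ε + 1) * q.2) / Dps ε q.1 q.2)

/-- The invariant conic `C_h` of `Φ_ε`. -/
def Cps (ε h : ℝ) : Set (ℝ × ℝ) :=
  {q : ℝ × ℝ | (2 - 5 * ε ^ 2 - 2 * ε ^ 2 * h) * q.1 ^ 2 + 2 * q.1 * q.2 + q.2 ^ 2
      - 6 * q.1 - 4 * q.2 - 2 * h = 0}

/-- The invariant density `ν(x,y) = 1/(2|x|(ε²x²+1))` on `ℝ² \ {x = 0}`. -/
noncomputable def nups (ε : ℝ) (q : ℝ × ℝ) : ℝ := 1 / (2 * |q.1| * (ε ^ 2 * q.1 ^ 2 + 1))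

theorem ContinuousLinearMap.det_eq_of_prod_self {R : Type*} [CommRing R] [TopologicalSpace R]
    (L : R × R →L[R] R × R) :
    L.det = (L (1, 0)).1 * (L (0, 1)).2 - (L (0, 1)).1 * (L (1, 0)).2 := by
  rw [ContinuousLinearMap.det, ← LinearMap.det_toMatrix (Module.Basis.finTwoProd R),
    Matrix.det_fin_two]
  simp [LinearMap.toMatrix_apply]

section
variable {𝕜 : Type*} [NontriviallyNormedField 𝕜] {a b d : 𝕜 × 𝕜 → 𝕜}
  {a' b' d' : 𝕜 × 𝕜 →L[𝕜] 𝕜} {p : 𝕜 × 𝕜}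

theorem det_fderiv_prod_div_mul_pow_three (ha : HasFDerivAt a a' p) (hb : HasFDerivAt b b' p)
    (hd : HasFDerivAt d d' p) (hd0 : d p ≠ 0) :
    (fderiv 𝕜 (fun q => (a q / d q, b q / d q)) p).det * d p ^ 3 =
      d p * (a'.prod b').det (R := 𝕜) - a p * (d'.prod b').det (R := 𝕜)
        - b p * (a'.prod d').det (R := 𝕜) := by
  have hinv : HasFDerivAt (fun q => (d q)⁻¹) (-(d p ^ 2)⁻¹ • d') p :=
    (hasDerivAt_inv hd0).comp_hasFDerivAt p hd
  simp only [div_eq_mul_inv]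
  rw [((ha.fun_mul hinv).prodMk (hb.fun_mul hinv)).fderiv]
  simp only [ContinuousLinearMap.det_eq_of_prod_self, ContinuousLinearMap.prod_apply,
    add_apply, smul_apply, smul_eq_mul]
  field_simp
  ring
end

theorem det_fderiv_Phips_mul {ε x y : ℝ} (hD : Dps ε x y ≠ 0) :
    (fderiv ℝ (Phips ε) (x, y)).det * (x * (ε ^ 2 * x ^ 2 + 1)) =
      (Phips ε (x, y)).1 * (ε ^ 2 * (Phips ε (x, y)).1 ^ 2 + 1) := by
  have hfst : HasFDerivAt (fun q : ℝ × ℝ => q.1) (ContinuousLinearMap.fst ℝ ℝ ℝ) (x, y) :=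
    hasFDerivAt_fst
  have hsnd : HasFDerivAt (fun q : ℝ × ℝ => q.2) (ContinuousLinearMap.snd ℝ ℝ ℝ) (x, y) :=
    hasFDerivAt_snd
  have hx2 := (hasDerivAt_pow 2 x).comp_hasFDerivAt (x, y) hfst
  have hy2 := (hasDerivAt_pow 2 y).comp_hasFDerivAt (x, y) hsnd
  have hN₁ : HasFDerivAt (fun q : ℝ × ℝ =>
      ε * (ε + 1) * q.1 ^ 2 + ε * q.1 * q.2 + (1 - 2 * ε) * q.1) _ (x, y) :=
    ((hx2.const_mul (ε * (ε + 1))).add ((hfst.const_mul ε).mul hsnd)).add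
      (hfst.const_mul (1 - 2 * ε))
  have hN₂ : HasFDerivAt (fun q : ℝ × ℝ =>
      ε * (2 * ε - 4) * q.1 ^ 2 - ε * (ε + 3) * q.1 * q.2 + 6 * ε * q.1 - ε * q.2 ^ 2
        + (2 * ε + 1) * q.2) _ (x, y) :=
    ((((hx2.const_mul (ε * (2 * ε - 4))).sub
      ((hfst.const_mul (ε * (ε + 3))).mul hsnd)).add (hfst.const_mul (6 * ε))).sub
      (hy2.const_mul ε)).add (hsnd.const_mul (2 * ε + 1))
  have hD' : HasFDerivAt (fun q : ℝ × ℝ => Dps ε q.1 q.2) _ (x, y) :=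
    ((((hx2.const_mul (2 * ε ^ 2)).sub (hfst.const_mul (ε * (ε + 1)))).sub
      (hsnd.const_mul ε)).add_const (2 * ε)).add_const 1
  have hJ : (fderiv ℝ (Phips ε) (x, y)).det * Dps ε x y ^ 3 = _ :=
    det_fderiv_prod_div_mul_pow_three hN₁ hN₂ hD' hD
  generalize (fderiv ℝ (Phips ε) (x, y)).det = J at hJ ⊢
  simp only [ContinuousLinearMap.det_eq_of_prod_self, ContinuousLinearMap.prod_apply, add_apply,
    sub_apply, smul_apply, smul_eq_mul, ContinuousLinearMap.coe_fst',
    ContinuousLinearMap.coe_snd'] at hJ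
  simp only [Phips]
  field_simp
  unfold Dps at hJ ⊢
  linear_combination (x * (ε ^ 2 * x ^ 2 + 1)) * hJ

theorem nups_eq (ε : ℝ) (q : ℝ × ℝ) : nups ε q = 1 / (2 * |q.1 * (ε ^ 2 * q.1 ^ 2 + 1)|) := by
  rw [nups, abs_mul, abs_of_pos (by positivity : 0 < ε ^ 2 * q.1 ^ 2 + 1), mul_assoc]

theorem stmt_9 (ε x y : ℝ) (hx : x ≠ 0) (hD : Dps ε x y ≠ 0)
    (h1 : (Phips ε (x, y)).1 ≠ 0) :
    nups ε (Phips ε (x, y)) * |(fderiv ℝ (Phips ε) (x, y)).det| = nups ε (x, y) := by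
  have hgx : |x * (ε ^ 2 * x ^ 2 + 1)| ≠ 0 := abs_ne_zero.2 (mul_ne_zero hx (by positivity))
  have hgu : |(Phips ε (x, y)).1 * (ε ^ 2 * (Phips ε (x, y)).1 ^ 2 + 1)| ≠ 0 :=
    abs_ne_zero.2 (mul_ne_zero h1 (by positivity))
  have hdet : |(fderiv ℝ (Phips ε) (x, y)).det| =
      |(Phips ε (x, y)).1 * (ε ^ 2 * (Phips ε (x, y)).1 ^ 2 + 1)| / |x * (ε ^ 2 * x ^ 2 + 1)| :=
    eq_div_of_mul_eq hgx (by rw [← abs_mul, det_fderiv_Phips_mul hD])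
  rw [nups_eq, nups_eq, hdet]
  field_simp
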